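/- arXiv:1301.3720 — 3 statements merged into one kernel-verified Lean document; each statement's English description precedes it below -/
import Mathlib

section
/- Let I be a conditional independence relation on a finite set V satisfying Strong Union and the Intersection property (in counter-positive form: ¬I(X,Y|Z) ∧ I(X,W|Z∪{Y}) → ¬I(X,Y|Z∪{W})), and suppose I satisfies the pairwise Markov property with respect to a graph G. Then for distinct X, Y, if ¬I(X, Y | MB(X)∖{Y}) holds and I(X, W | (MB(X)∖{Y})∪{Y}) holds for every W ∉ MB(X)∪{X}, then (X,Y) is an edge of G. -/
/-!
Suppose `X` and `Y` are not adjacent, so that `MB(X) ∖ {Y} = MB(X)`. Add the vertices outside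
`MB(X) ∪ {X, Y}` one at a time to the conditioning set `MB(X)`: Strong Union lifts each
`I(X, W | MB(X) ∪ {Y})` to the current conditioning set, and Intersection then keeps `X` and `Y`
dependent. At the end the conditioning set is `V ∖ {X, Y}`, contradicting the pairwise Markov
property.
-/

section

variable {V : Type*} [DecidableEq V] (I : V → V → Finset V → Prop)

def StrongUnion : Prop :=
  ∀ (X Y W : V) (Z : Finset V), X ≠ Y → W ∉ Z → W ≠ X → W ≠ Y → I X Y Z → I X Y (insert W Z)

def Intersection : Prop :=
  ∀ (X Y W : V) (Z : Finset V), X ≠ Y → X ≠ W → Y ≠ W → X ∉ Z → Y ∉ Z → W ∉ Z →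
    ¬ I X Y Z → I X W (insert Y Z) → ¬ I X Y (insert W Z)

variable {I}

theorem StrongUnion.union (hSU : StrongUnion I) {X Y : V} {Z T : Finset V} (hXY : X ≠ Y)
    (hXT : X ∉ T) (hYT : Y ∉ T) (hI : I X Y Z) : I X Y (Z ∪ T) := by
  induction T using Finset.induction_on with
  | empty => simpa using hI
  | insert t T _ ih =>
    rw [Finset.mem_insert, not_or] at hXT hYT
    rw [Finset.union_insert]
    by_cases ht : t ∈ Z ∪ T
    · rw [Finset.insert_eq_of_mem ht]
      exact ih hXT.2 hYT.2
    · exact hSU X Y t _ hXY ht (Ne.symm hXT.1) (Ne.symm hYT.1) (ih hXT.2 hYT.2)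

theorem Intersection.not_union (hInt : Intersection I) (hSU : StrongUnion I) {X Y : V}
    {Z T : Finset V} (hXY : X ≠ Y) (hXZ : X ∉ Z) (hYZ : Y ∉ Z) (hXT : X ∉ T) (hYT : Y ∉ T)
    (hZT : Disjoint Z T) (hdep : ¬ I X Y Z) (hind : ∀ W ∈ T, I X W (insert Y Z)) :
    ¬ I X Y (Z ∪ T) := by
  induction T using Finset.induction_on with
  | empty => simpa using hdep
  | insert t T htT ih =>
    rw [Finset.mem_insert, not_or] at hXT hYT
    rw [Finset.disjoint_insert_right] at hZT
    rw [Finset.forall_mem_insert] at hind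
    have hdep' : ¬ I X Y (Z ∪ T) := ih hXT.2 hYT.2 hZT.2 hind.2
    have hind' : I X t (insert Y (Z ∪ T)) := by
      rw [← Finset.insert_union]
      exact hSU.union hXT.1 hXT.2 htT hind.1
    rw [Finset.union_insert]
    exact hInt X Y t _ hXY hXT.1 hYT.1 (by simp [hXZ, hXT.2]) (by simp [hYZ, hYT.2])
      (by simp [hZT.1, htT]) hdep' hind'

end

/-- Lemma 2 of the paper. -/
theorem lemma_edge
    {V : Type*} [Fintype V] [DecidableEq V]
    (I : V → V → Finset V → Prop)
    (G : SimpleGraph V) [DecidableRel G.Adj]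
    (hSU : ∀ (X Y W : V) (Z : Finset V), X ≠ Y → W ∉ Z → W ≠ X → W ≠ Y →
      I X Y Z → I X Y (insert W Z))
    (hInt : ∀ (X Y W : V) (Z : Finset V), X ≠ Y → X ≠ W → Y ≠ W →
      X ∉ Z → Y ∉ Z → W ∉ Z →
      ¬ I X Y Z → I X W (insert Y Z) → ¬ I X Y (insert W Z))
    (hPM : ∀ X Y : V, X ≠ Y →
      (¬ G.Adj X Y ↔ I X Y (Finset.univ \ {X, Y})))
    (X Y : V) (hXY : X ≠ Y)
    (hdep : ¬ I X Y (G.neighborFinset X \ {Y}))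
    (hind : ∀ W : V, W ∉ G.neighborFinset X → W ≠ X →
      I X W (insert Y (G.neighborFinset X \ {Y}))) :
    G.Adj X Y := by
  by_contra hAdj
  set N := G.neighborFinset X
  have hXN : X ∉ N := by simp [N]
  have hYN : Y ∉ N := by simpa [N] using hAdj
  rw [Finset.sdiff_singleton_eq_erase, Finset.erase_eq_of_notMem hYN] at hdep hind
  have hcover : N ∪ (Finset.univ \ {X, Y}) \ N = Finset.univ \ {X, Y} :=
    Finset.union_sdiff_of_subset fun W hW => by
      simpa using ⟨ne_of_mem_of_not_mem hW hXN, ne_of_mem_of_not_mem hW hYN⟩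
  refine Intersection.not_union hInt hSU hXY hXN hYN (by simp) (by simp) Finset.disjoint_sdiff
    hdep ?_ (hcover ▸ (hPM X Y hXY).mp hAdj)
  intro W hW
  simp only [Finset.mem_sdiff, Finset.mem_univ, Finset.mem_insert, Finset.mem_singleton,
    not_or, true_and] at hW
  exact hind W hW.2 hW.1.1
end

section
/- Let I be a conditional independence relation on finite V satisfying Strong Union and Intersection. Fix distinct X,Y and a set Z ⊆ V∖{X,Y}. If ¬I(X,Y|Z) holds, and I(X,W|Z∪{Y}) holds for every W ∈ V∖(Z∪{X,Y}), then ¬I(X,Y|V∖{X,Y}) holds. -/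
/-! Adding the variables of `V ∖ (Z ∪ {X, Y})` to `Z` one at a time, each new `W` satisfies
`I(X, W | Z' ∪ {Y})` by Strong Union applied to the hypothesis at `Z`, so Intersection keeps `X`
and `Y` dependent at every stage. -/

theorem Finset.induction_on_subset {α : Type*} [DecidableEq α] {motive : Finset α → Prop}
    {s t : Finset α} (hst : s ⊆ t) (base : motive s)
    (step : ∀ a u, s ⊆ u → u ⊆ t → a ∈ t → a ∉ u → motive u → motive (insert a u)) :
    motive t := by
  have key : motive (t \ s ∪ s) := by
    refine Finset.induction_on' (motive := fun r => motive (r ∪ s)) (t \ s) (by simpa) ?_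
    intro a r ha hr har ih
    rw [Finset.mem_sdiff] at ha
    rw [Finset.insert_union]
    refine step a (r ∪ s) Finset.subset_union_right ?_ ha.1 ?_ ih
    · exact Finset.union_subset (hr.trans Finset.sdiff_subset) hst
    · simp [har, ha.2]
  rwa [Finset.sdiff_union_of_subset hst] at key

theorem indep_of_subset {V : Type*} [DecidableEq V] {I : V → V → Finset V → Prop}
    (hSU : ∀ (X Y W : V) (Z : Finset V), X ≠ Y → W ∉ Z → W ≠ X → W ≠ Y →
      I X Y Z → I X Y (insert W Z))
    {X Y : V} (hXY : X ≠ Y) {Z Z' : Finset V} (hZZ' : Z ⊆ Z') (hXZ' : X ∉ Z') (hYZ' : Y ∉ Z')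
    (h : I X Y Z) : I X Y Z' := by
  refine Finset.induction_on_subset hZZ' h fun W _ _ hu hWZ' hWu => hSU X Y W _ hXY hWu ?_ ?_
  · rintro rfl; exact hXZ' hWZ'
  · rintro rfl; exact hYZ' hWZ'

/-- the iterated blanket-extension argument (core of Lemma 2). -/
theorem iterated_intersection_extension
    {V : Type*} [Fintype V] [DecidableEq V]
    (I : V → V → Finset V → Prop)
    (hSU : ∀ (X Y W : V) (Z : Finset V), X ≠ Y → W ∉ Z → W ≠ X → W ≠ Y →
      I X Y Z → I X Y (insert W Z))
    (hInt : ∀ (X Y W : V) (Z : Finset V), X ≠ Y → X ≠ W → Y ≠ W →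
      X ∉ Z → Y ∉ Z → W ∉ Z →
      ¬ I X Y Z → I X W (insert Y Z) → ¬ I X Y (insert W Z))
    (X Y : V) (hXY : X ≠ Y) (Z : Finset V) (hXZ : X ∉ Z) (hYZ : Y ∉ Z)
    (hdep : ¬ I X Y Z)
    (hind : ∀ W : V, W ∉ Z → W ≠ X → W ≠ Y → I X W (insert Y Z)) :
    ¬ I X Y (Finset.univ \ {X, Y}) := by
  have hZ : Z ⊆ Finset.univ \ {X, Y} := fun W hW => by
    simp only [Finset.mem_sdiff, Finset.mem_univ, Finset.mem_insert, Finset.mem_singleton, true_and]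
    rintro (rfl | rfl) <;> contradiction
  refine Finset.induction_on_subset (motive := fun Z' => ¬ I X Y Z') hZ hdep fun W Z' hZZ' hZ'U hWU hWZ' hdep' => ?_
  have hX : X ∉ Z' := fun h => by simpa using hZ'U h
  have hY : Y ∉ Z' := fun h => by simpa using hZ'U h
  obtain ⟨hWX, hWY⟩ : W ≠ X ∧ W ≠ Y := by simpa [not_or] using hWU
  have hindW : I X W (insert Y Z') :=
    indep_of_subset hSU hWX.symm (Finset.insert_subset_insert Y hZZ')
      (by simp [hXY, hX]) (by simp [hWY, hWZ']) (hind W (fun h => hWZ' (hZZ' h)) hWX hWY)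
  exact hInt X Y W Z' hXY hWX.symm hWY.symm hX hY hWZ' hdep' hindW
end

section
/- Let P be a strictly positive distribution over finitely many discrete random variables. Then the conditional independence relation of P satisfies the Intersection property: if X ⟂ Y | Z∪{W} and X ⟂ W | Z∪{Y}, then X ⟂ {Y,W} | Z (in particular X ⟂ Y | Z). -/
/-!
Write `m_T` for the marginal on `T`. The two hypotheses express the joint marginal
`m_{XYWZ}` in two ways, and cancelling the positive factor `m_{YWZ}` gives
`m_{XWZ} m_{YZ} = m_{XYZ} m_{WZ}`, i.e. `p(x | w, z) = p(x | y, z)`. Summing this over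
the values of `Y` yields `X ⟂ W | Z`, and summing over the values of `W` yields `X ⟂ Y | Z`.
Contraction of `X ⟂ Y | Z ∪ {W}` with `X ⟂ W | Z` then gives `X ⟂ {Y, W} | Z`.
-/

open Finset

variable {ι : Type*} [Fintype ι] [DecidableEq ι]
  {α : ι → Type*} [∀ i, Fintype (α i)] [∀ i, DecidableEq (α i)]

/-- Marginal of the joint mass function `P` on the coordinates in `A`,
evaluated at (the restriction to `A` of) the assignment `x`. -/
def marginal (P : (∀ i, α i) → ℝ) (A : Finset ι) (x : ∀ i, α i) : ℝ :=
  ∑ y ∈ Finset.univ.filter (fun y : ∀ i, α i => ∀ i ∈ A, y i = x i), P y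

/-- Conditional independence of the sets of variables `A` and `B` given `S`,
expressed by the factorization of marginals of the joint mass function `P`. -/
def CondIndep (P : (∀ i, α i) → ℝ) (A B S : Finset ι) : Prop :=
  ∀ x : ∀ i, α i,
    marginal P (A ∪ B ∪ S) x * marginal P S x
      = marginal P (A ∪ S) x * marginal P (B ∪ S) x

section Marginal

variable {P : (∀ i, α i) → ℝ} {A B : Finset ι} {j : ι}

theorem marginal_nonneg (hP : ∀ v, 0 ≤ P v) (A : Finset ι) (x : ∀ i, α i) :
    0 ≤ marginal P A x :=
  sum_nonneg fun y _ => hP y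

theorem marginal_pos (hP : ∀ v, 0 < P v) (A : Finset ι) (x : ∀ i, α i) :
    0 < marginal P A x :=
  sum_pos (fun y _ => hP y) ⟨x, by simp⟩

theorem marginal_anti (hP : ∀ v, 0 ≤ P v) (hAB : A ⊆ B) (x : ∀ i, α i) :
    marginal P B x ≤ marginal P A x := by
  refine sum_le_sum_of_subset_of_nonneg ?_ fun y _ _ => hP y
  intro y
  simp only [mem_filter, mem_univ, true_and]
  exact fun hy i hi => hy i (hAB hi)

theorem marginal_eq_zero_of_subset (hP : ∀ v, 0 ≤ P v) (hAB : A ⊆ B) {x : ∀ i, α i}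
    (h0 : marginal P A x = 0) : marginal P B x = 0 :=
  le_antisymm (h0 ▸ marginal_anti hP hAB x) (marginal_nonneg hP B x)

theorem marginal_update_of_notMem (hj : j ∉ A) (x : ∀ i, α i) (a : α j) :
    marginal P A (Function.update x j a) = marginal P A x := by
  have hupd : ∀ i ∈ A, Function.update x j a i = x i := fun i hi =>
    Function.update_of_ne (ne_of_mem_of_not_mem hi hj) _ _
  unfold marginal
  congr 1
  ext y
  simp only [mem_filter, mem_univ, true_and]
  exact ⟨fun h i hi => (h i hi).trans (hupd i hi), fun h i hi => (h i hi).trans (hupd i hi).symm⟩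

theorem sum_marginal_insert (hj : j ∉ A) (x : ∀ i, α i) :
    ∑ a : α j, marginal P (insert j A) (Function.update x j a) = marginal P A x := by
  unfold marginal
  rw [← sum_fiberwise (univ.filter fun y : ∀ i, α i => ∀ i ∈ A, y i = x i) (fun y => y j) P]
  refine sum_congr rfl fun a _ => ?_
  congr 1
  ext y
  simp only [mem_filter, mem_univ, true_and, forall_mem_insert, Function.update_self]
  have hupd : ∀ i ∈ A, Function.update x j a i = x i := fun i hi =>
    Function.update_of_ne (ne_of_mem_of_not_mem hi hj) _ _
  exact ⟨fun ⟨hja, hA⟩ => ⟨fun i hi => (hA i hi).trans (hupd i hi), hja⟩,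
    fun ⟨hA, hja⟩ => ⟨hja, fun i hi => (hA i hi).trans (hupd i hi).symm⟩⟩

theorem sum_marginal_insert_mul (hjA : j ∉ A) (hjB : j ∉ B) (x : ∀ i, α i) :
    ∑ a : α j, marginal P (insert j A) (Function.update x j a) *
        marginal P B (Function.update x j a)
      = marginal P A x * marginal P B x := by
  simp only [marginal_update_of_notMem hjB, ← sum_mul, sum_marginal_insert hjA]

theorem sum_mul_marginal_insert (hjA : j ∉ A) (hjB : j ∉ B) (x : ∀ i, α i) :
    ∑ a : α j, marginal P B (Function.update x j a) *
        marginal P (insert j A) (Function.update x j a)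
      = marginal P B x * marginal P A x := by
  simp only [mul_comm (marginal P B _), sum_marginal_insert_mul hjA hjB]

end Marginal

section CondIndep

variable {P : (∀ i, α i) → ℝ} {A B C S : Finset ι} {j k : ι}

theorem CondIndep.contraction (hP : ∀ v, 0 ≤ P v) (h₁ : CondIndep P A B (C ∪ S))
    (h₂ : CondIndep P A C S) : CondIndep P A (B ∪ C) S := by
  intro x
  have h₁ := h₁ x
  have h₂ := h₂ x
  rw [union_assoc A C S] at h₂
  rw [show A ∪ (B ∪ C) ∪ S = A ∪ B ∪ (C ∪ S) by ac_rfl, union_assoc B C S]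
  by_cases h0 : marginal P (C ∪ S) x = 0
  · rw [marginal_eq_zero_of_subset hP subset_union_right h0,
      marginal_eq_zero_of_subset hP subset_union_right h0, zero_mul, mul_zero]
  · apply mul_right_cancel₀ h0
    linear_combination marginal P S x * h₁ + marginal P (B ∪ (C ∪ S)) x * h₂

/-- In conditional-probability form: `p(a | k, s) = p(a | j, s)`. -/
theorem CondIndep.marginal_union_insert_mul_eq (hP : ∀ v, 0 < P v)
    (h₁ : CondIndep P A {j} (insert k S)) (h₂ : CondIndep P A {k} (insert j S))
    (x : ∀ i, α i) :
    marginal P (A ∪ insert k S) x * marginal P (insert j S) x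
      = marginal P (A ∪ insert j S) x * marginal P (insert k S) x := by
  have h₁ := h₁ x
  have h₂ := h₂ x
  rw [show A ∪ {j} ∪ insert k S = A ∪ {k} ∪ insert j S by ext; simp; tauto,
    show ({j} : Finset ι) ∪ insert k S = {k} ∪ insert j S by ext; simp; tauto] at h₁
  apply mul_right_cancel₀ (marginal_pos hP ({k} ∪ insert j S) x).ne'
  linear_combination -marginal P (insert j S) x * h₁ + marginal P (insert k S) x * h₂

theorem condIndep_of_marginal_union_insert_mul_eq (hjA : j ∉ A) (hjk : j ≠ k) (hjS : j ∉ S)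
    (h : ∀ x, marginal P (A ∪ insert k S) x * marginal P (insert j S) x
      = marginal P (A ∪ insert j S) x * marginal P (insert k S) x) :
    CondIndep P A {k} S := by
  intro x
  have hjAkS : j ∉ A ∪ insert k S := by simp [hjA, hjk, hjS]
  have hjkS : j ∉ insert k S := by simp [hjk, hjS]
  rw [union_assoc, ← insert_eq]
  calc marginal P (A ∪ insert k S) x * marginal P S x
      = ∑ a : α j, marginal P (A ∪ insert k S) (Function.update x j a) *
          marginal P (insert j S) (Function.update x j a) :=
        (sum_mul_marginal_insert hjS hjAkS x).symm
    _ = ∑ a : α j, marginal P (A ∪ insert j S) (Function.update x j a) *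
          marginal P (insert k S) (Function.update x j a) :=
        sum_congr rfl fun a _ => h _
    _ = marginal P (A ∪ S) x * marginal P (insert k S) x := by
        rw [← sum_marginal_insert_mul (by simp [hjA, hjS]) hjkS x]
        simp only [union_insert]

end CondIndep

theorem positive_distribution_intersection_general
    (P : (∀ i, α i) → ℝ)
    (hpos : ∀ v, 0 < P v)
    (X Y W : ι) (Z : Finset ι)
    (hXY : X ≠ Y) (hXW : X ≠ W) (hYW : Y ≠ W)
    (hYZ : Y ∉ Z) (hWZ : W ∉ Z)
    (h1 : CondIndep P {X} {Y} (insert W Z))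
    (h2 : CondIndep P {X} {W} (insert Y Z)) :
    CondIndep P {X} {Y, W} Z ∧ CondIndep P {X} {Y} Z := by
  have key := h1.marginal_union_insert_mul_eq hpos h2
  have hW : CondIndep P {X} {W} Z :=
    condIndep_of_marginal_union_insert_mul_eq (by simpa using hXY.symm) hYW hYZ key
  have hY : CondIndep P {X} {Y} Z :=
    condIndep_of_marginal_union_insert_mul_eq (by simpa using hXW.symm) hYW.symm hWZ
      fun x => (key x).symm
  rw [insert_eq W Z] at h1
  rw [insert_eq Y {W}]
  exact ⟨h1.contraction (fun v => (hpos v).le) hW, hY⟩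

/-- a strictly positive distribution satisfies the Intersection
property: X ⟂ Y | Z∪{W} and X ⟂ W | Z∪{Y} imply X ⟂ {Y,W} | Z, and in
particular X ⟂ Y | Z. -/
theorem positive_distribution_intersection
    (P : (∀ i, α i) → ℝ)
    (hpos : ∀ v, 0 < P v) (hsum : ∑ v, P v = 1)
    (X Y W : ι) (Z : Finset ι)
    (hXY : X ≠ Y) (hXW : X ≠ W) (hYW : Y ≠ W)
    (hXZ : X ∉ Z) (hYZ : Y ∉ Z) (hWZ : W ∉ Z)
    (h1 : CondIndep P {X} {Y} (insert W Z))
    (h2 : CondIndep P {X} {W} (insert Y Z)) :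
    CondIndep P {X} {Y, W} Z ∧ CondIndep P {X} {Y} Z :=
  positive_distribution_intersection_general P hpos X Y W Z hXY hXW hYW hYZ hWZ h1 h2
end
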